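/- Let ⟨S, F⟩ be an F-system. A labelling L maximizes T (i.e. there is no labelling L' with {x : L(x) = T} strictly contained in {x : L'(x) = T}) if and only if the set A = {x : L(x) = T} is a maximal local conglomerate (a local conglomerate not strictly contained in any other local conglomerate). -/
import Mathlib


/-- Truth labels: True, False, Undetermined. -/
inductive Label where
  | T : Label
  | F : Label
  | U : Label
  deriving DecidableEq

variable {S : Type*}

/-- F→(x): the sentences whose falsity x affirms. -/
def FOut (F : S → S → Prop) (x : S) : Set S := {y | F x y}

/-- F←(x): the sentences affirming the falsity of x. -/
def FIn (F : S → S → Prop) (x : S) : Set S := {y | F y x}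

/-- F→(A). -/
def FOutSet (F : S → S → Prop) (A : Set S) : Set S := ⋃ x ∈ A, FOut F x

/-- F←(A). -/
def FInSet (F : S → S → Prop) (A : Set S) : Set S := ⋃ x ∈ A, FIn F x

/-- A sink is a node with no outgoing edges. -/
def IsSink (F : S → S → Prop) (x : S) : Prop := FOut F x = ∅

/-- sinks(A): the sinks belonging to A. -/
def sinks (F : S → S → Prop) (A : Set S) : Set S := {x ∈ A | IsSink F x}

/-- A labelling: for every non-sink x, L x = F iff some z ∈ F→(x) has L z = T,
and L x = T iff every z ∈ F→(x) has L z = F. -/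
def IsLabelling (F : S → S → Prop) (L : S → Label) : Prop :=
  ∀ x, ¬ IsSink F x →
    ((L x = Label.F ↔ ∃ z ∈ FOut F x, L z = Label.T) ∧
     (L x = Label.T ↔ ∀ z ∈ FOut F x, L z = Label.F))

/-- A labelling is classical iff no sentence gets the label U. -/
def IsClassical (L : S → Label) : Prop := ∀ x, L x ≠ Label.U

/-- A conglomerate: (1) F←(A) ⊆ S \ A, (2) (S \ A) \ sinks(S) ⊆ F←(A). -/
def Conglomerate (F : S → S → Prop) (A : Set S) : Prop :=
  FInSet F A ⊆ Aᶜ ∧ Aᶜ \ sinks F Set.univ ⊆ FInSet F A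

/-- A local conglomerate: (1) F←(A) ⊆ S \ A, (2) F→(A) \ sinks(S) ⊆ F←(A). -/
def LocalConglomerate (F : S → S → Prop) (A : Set S) : Prop :=
  FInSet F A ⊆ Aᶜ ∧ FOutSet F A \ sinks F Set.univ ⊆ FInSet F A

/-- The operator φ on pairs of subsets of S. -/
def phi (F : S → S → Prop) (p : Set S × Set S) : Set S × Set S :=
  (sinks F p.1 ∪ {x | FOut F x ≠ ∅ ∧ FOut F x ⊆ p.2},
   sinks F p.2 ∪ {x | FOut F x ∩ p.1 ≠ ∅})

/-- The order on pairs: componentwise inclusion. -/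
def PairLe (p q : Set S × Set S) : Prop := p.1 ⊆ q.1 ∧ p.2 ⊆ q.2

/-- An F-system is paradoxical iff it has no classical labelling. -/
def IsParadoxical (F : S → S → Prop) : Prop :=
  ¬ ∃ L : S → Label, IsLabelling F L ∧ IsClassical L

/-- x is a referential contradiction iff every classical labelling labels it F. -/
def RefContradiction (F : S → S → Prop) (x : S) : Prop :=
  ∀ L : S → Label, IsLabelling F L → IsClassical L → L x = Label.F

/-- x is a referential tautology iff every classical labelling labels it T. -/
def RefTautology (F : S → S → Prop) (x : S) : Prop :=
  ∀ L : S → Label, IsLabelling F L → IsClassical L → L x = Label.T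

section Aux

variable {S : Type*}

lemma mem_FInSet {F : S → S → Prop} {B : Set S} {y : S} :
    y ∈ FInSet F B ↔ ∃ x ∈ B, F y x := by
  simp [FInSet, FIn, Set.mem_iUnion]

lemma mem_FOutSet {F : S → S → Prop} {B : Set S} {y : S} :
    y ∈ FOutSet F B ↔ ∃ x ∈ B, F x y := by
  simp [FOutSet, FOut, Set.mem_iUnion]

lemma not_isSink_iff {F : S → S → Prop} {x : S} :
    ¬ IsSink F x ↔ ∃ z, F x z := by
  simp [IsSink, FOut, Set.eq_empty_iff_forall_notMem, Set.ext_iff]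

/-- The T-set of a labelling is a local conglomerate. -/
lemma labelling_T_localCong {F : S → S → Prop} {L : S → Label}
    (hL : IsLabelling F L) : LocalConglomerate F {x | L x = Label.T} := by
  constructor
  · intro y hy
    rw [mem_FInSet] at hy
    obtain ⟨x, hx, hyx⟩ := hy
    have hns : ¬ IsSink F y := not_isSink_iff.2 ⟨x, hyx⟩
    have hF : L y = Label.F := (hL y hns).1.2 ⟨x, hyx, hx⟩
    intro hyT
    simp only [Set.mem_setOf_eq] at hyT
    rw [hyT] at hF; exact Label.noConfusion hF
  · intro z hz
    obtain ⟨hz1, hz2⟩ := hz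
    rw [mem_FOutSet] at hz1
    obtain ⟨x, hx, hxz⟩ := hz1
    have hns : ¬ IsSink F z := by
      intro h; exact hz2 ⟨Set.mem_univ z, h⟩
    have hxns : ¬ IsSink F x := not_isSink_iff.2 ⟨z, hxz⟩
    have hzF : L z = Label.F := (hL x hxns).2.1 hx z hxz
    obtain ⟨w, hw, hwT⟩ := (hL z hns).1.1 hzF
    exact mem_FInSet.2 ⟨w, hwT, hw⟩

open OrderHom in
/-- Any local conglomerate is contained in the T-set of some labelling. -/
lemma localCong_extends {F : S → S → Prop} {B : Set S}
    (hB : LocalConglomerate F B) :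
    ∃ L' : S → Label, IsLabelling F L' ∧ B ⊆ {x | L' x = Label.T} := by
  classical
  set F0 : Set S := FInSet F B ∪ (sinks F Set.univ ∩ FOutSet F B) with hF0def
  -- basic facts about B and F0
  have hBF0 : ∀ x ∈ B, ∀ z, F x z → z ∈ F0 := by
    intro x hx z hxz
    by_cases hzs : IsSink F z
    · exact Or.inr ⟨⟨Set.mem_univ z, hzs⟩, mem_FOutSet.2 ⟨x, hx, hxz⟩⟩
    · exact Or.inl (hB.2 ⟨mem_FOutSet.2 ⟨x, hx, hxz⟩, fun h => hzs h.2⟩)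
  have hF0B : ∀ x ∈ F0, x ∉ B := by
    rintro x (hx | ⟨_, hx⟩) hxB
    · exact hB.1 hx hxB
    · obtain ⟨b, hb, hbx⟩ := mem_FOutSet.1 hx
      exact hB.1 (mem_FInSet.2 ⟨x, hxB, hbx⟩) hb
  have hF0ns : ∀ x ∈ F0, ¬ IsSink F x → x ∈ FInSet F B := by
    rintro x (hx | ⟨⟨_, hs⟩, _⟩) hns
    · exact hx
    · exact absurd hs hns
  -- the monotone operator
  set ψ : (Set S × Set S) →o (Set S × Set S) :=
    { toFun := fun p =>
        (B ∪ (sinks F p.1 ∪ {x | ¬ IsSink F x ∧ FOut F x ⊆ p.2}),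
         F0 ∪ (sinks F p.2 ∪ {x | ∃ z, F x z ∧ z ∈ p.1})),
      monotone' := by
        rintro ⟨T1, F1⟩ ⟨T2, F2⟩ ⟨h1, h2⟩
        constructor
        · rintro x (hx | hx | hx)
          · exact Or.inl hx
          · exact Or.inr (Or.inl ⟨h1 hx.1, hx.2⟩)
          · exact Or.inr (Or.inr ⟨hx.1, hx.2.trans h2⟩)
        · rintro x (hx | hx | hx)
          · exact Or.inl hx
          · exact Or.inr (Or.inl ⟨h2 hx.1, hx.2⟩)
          · obtain ⟨z, hz1, hz2⟩ := hx
            exact Or.inr (Or.inr ⟨z, hz1, h1 hz2⟩) } with hψdef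
  set P : Set S × Set S := ψ.lfp with hPdef
  have hfix : ψ P = P := ψ.map_lfp
  have hmemT : ∀ x, x ∈ P.1 ↔
      (x ∈ B ∨ (x ∈ P.1 ∧ IsSink F x) ∨ (¬ IsSink F x ∧ FOut F x ⊆ P.2)) := by
    intro x
    conv_lhs => rw [← hfix]
    rfl
  have hmemF : ∀ x, x ∈ P.2 ↔
      (x ∈ F0 ∨ (x ∈ P.2 ∧ IsSink F x) ∨ (∃ z, F x z ∧ z ∈ P.1)) := by
    intro x
    conv_lhs => rw [← hfix]
    rfl
  have hBP : B ⊆ P.1 := fun x hx => (hmemT x).2 (Or.inl hx)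
  have hF0P : F0 ⊆ P.2 := fun x hx => (hmemF x).2 (Or.inl hx)
  -- membership in sSup for the product lattice
  have hsSup : ∀ (s : Set (Set S × Set S)) (x : S),
      ((x ∈ (sSup s).1 ↔ ∃ a ∈ s, x ∈ a.1) ∧ (x ∈ (sSup s).2 ↔ ∃ a ∈ s, x ∈ a.2)) := by
    intro s x
    constructor
    · rw [Prod.fst_sSup, Set.sSup_eq_sUnion, Set.mem_sUnion]
      constructor
      · rintro ⟨t, ⟨a, ha, rfl⟩, hx⟩; exact ⟨a, ha, hx⟩
      · rintro ⟨a, ha, hx⟩; exact ⟨a.1, ⟨a, ha, rfl⟩, hx⟩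
    · rw [Prod.snd_sSup, Set.sSup_eq_sUnion, Set.mem_sUnion]
      constructor
      · rintro ⟨t, ⟨a, ha, rfl⟩, hx⟩; exact ⟨a, ha, hx⟩
      · rintro ⟨a, ha, hx⟩; exact ⟨a.2, ⟨a, ha, rfl⟩, hx⟩
  -- invariant r : B ∩ P.2 = ∅ and F0 ∩ P.1 = ∅
  have hr : (∀ x ∈ B, x ∉ P.2) ∧ (∀ x ∈ F0, x ∉ P.1) := by
    have := ψ.lfp_induction
      (p := fun a => (∀ x ∈ B, x ∉ a.2) ∧ (∀ x ∈ F0, x ∉ a.1)) ?_ ?_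
    · exact this
    · rintro a ⟨ha1, ha2⟩ hale
      constructor
      · rintro x hxB (hx | hx | ⟨z, hz1, hz2⟩)
        · exact hF0B x hx hxB
        · exact ha1 x hxB hx.1
        · exact ha2 z (hBF0 x hxB z hz1) hz2
      · rintro x hxF0 (hx | hx | ⟨hns, hsub⟩)
        · exact hF0B x hxF0 hx
        · exact ha2 x hxF0 hx.1
        · obtain ⟨b, hb, hxb⟩ := mem_FInSet.1 (hF0ns x hxF0 hns)
          exact ha1 b hb (hsub hxb)
    · intro s hs
      constructor
      · intro x hxB hx
        obtain ⟨a, ha, hxa⟩ := ((hsSup s x).2).1 hx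
        exact (hs a ha).1 x hxB hxa
      · intro x hxF0 hx
        obtain ⟨a, ha, hxa⟩ := ((hsSup s x).1).1 hx
        exact (hs a ha).2 x hxF0 hxa
  -- consistency : P.1 ∩ P.2 = ∅
  have hq : (∀ x ∈ P.1, x ∉ P.2) ∧ (∀ x ∈ P.2, x ∉ P.1) := by
    have := ψ.lfp_induction
      (p := fun a => (∀ x ∈ a.1, x ∉ P.2) ∧ (∀ x ∈ a.2, x ∉ P.1)) ?_ ?_
    · exact this
    · rintro a ⟨ha1, ha2⟩ hale
      constructor
      · rintro x (hx | hx | ⟨hns, hsub⟩) hxP2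
        · exact hr.1 x hx hxP2
        · exact ha1 x hx.1 hxP2
        · rcases (hmemF x).1 hxP2 with hx | hx | ⟨z, hz1, hz2⟩
          · obtain ⟨b, hb, hxb⟩ := mem_FInSet.1 (hF0ns x hx hns)
            exact ha2 b (hsub hxb) (hBP hb)
          · exact hns hx.2
          · exact ha2 z (hsub hz1) hz2
      · rintro x (hx | hx | ⟨z, hz1, hz2⟩) hxP1
        · exact hr.2 x hx hxP1
        · exact ha2 x hx.1 hxP1
        · rcases (hmemT x).1 hxP1 with hx | hx | ⟨hns, hsub⟩
          · exact ha1 z hz2 (hF0P (hBF0 x hx z hz1))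
          · exact (not_isSink_iff.2 ⟨z, hz1⟩) hx.2
          · exact ha1 z hz2 (hsub hz1)
    · intro s hs
      constructor
      · intro x hx hx2
        obtain ⟨a, ha, hxa⟩ := ((hsSup s x).1).1 hx
        exact (hs a ha).1 x hxa hx2
      · intro x hx hx1
        obtain ⟨a, ha, hxa⟩ := ((hsSup s x).2).1 hx
        exact (hs a ha).2 x hxa hx1
  -- the labelling
  refine ⟨fun x => if x ∈ P.1 then Label.T else if x ∈ P.2 then Label.F else Label.U, ?_, ?_⟩
  · intro x hns
    have hT : ∀ y, (if y ∈ P.1 then Label.T else if y ∈ P.2 then Label.F else Label.U)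
        = Label.T ↔ y ∈ P.1 := by
      intro y
      by_cases h1 : y ∈ P.1 <;> by_cases h2 : y ∈ P.2 <;> simp [h1, h2]
    have hF : ∀ y, (if y ∈ P.1 then Label.T else if y ∈ P.2 then Label.F else Label.U)
        = Label.F ↔ y ∈ P.2 := by
      intro y
      by_cases h1 : y ∈ P.1
      · simp only [if_pos h1]
        exact ⟨fun h => Label.noConfusion h, fun h => absurd h (hq.1 y h1)⟩
      · by_cases h2 : y ∈ P.2 <;> simp [h1, h2]
    constructor
    · rw [hF x]
      constructor
      · intro hx
        rcases (hmemF x).1 hx with hx | hx | ⟨z, hz1, hz2⟩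
        · obtain ⟨b, hb, hxb⟩ := mem_FInSet.1 (hF0ns x hx hns)
          exact ⟨b, hxb, (hT b).2 (hBP hb)⟩
        · exact absurd hx.2 hns
        · exact ⟨z, hz1, (hT z).2 hz2⟩
      · rintro ⟨z, hz1, hz2⟩
        exact (hmemF x).2 (Or.inr (Or.inr ⟨z, hz1, (hT z).1 hz2⟩))
    · rw [hT x]
      constructor
      · intro hx z hz
        have hzP2 : z ∈ P.2 := by
          rcases (hmemT x).1 hx with hx | hx | ⟨_, hsub⟩
          · exact hF0P (hBF0 x hx z hz)
          · exact absurd hx.2 hns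
          · exact hsub hz
        rw [hF z]; exact hzP2
      · intro h
        refine (hmemT x).2 (Or.inr (Or.inr ⟨hns, fun z hz => ?_⟩))
        exact (hF z).1 (h z hz)
  · intro x hx
    have := hBP hx
    simp only [Set.mem_setOf_eq, if_pos this]

end Aux

/-- a labelling L maximizes T iff {x : L x = T} is a maximal local
conglomerate. -/
theorem maximizes_T_iff_maximal_localConglomerate (F : S → S → Prop)
    (L : S → Label) (hL : IsLabelling F L) :
    (¬ ∃ L' : S → Label, IsLabelling F L' ∧
        {x | L x = Label.T} ⊂ {x | L' x = Label.T}) ↔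
    (LocalConglomerate F {x | L x = Label.T} ∧
      ∀ B : Set S, LocalConglomerate F B → ¬ ({x | L x = Label.T} ⊂ B)) := by
  constructor
  · intro h
    refine ⟨labelling_T_localCong hL, ?_⟩
    intro B hBC hAB
    obtain ⟨L', hL', hBL'⟩ := localCong_extends hBC
    exact h ⟨L', hL', lt_of_lt_of_le hAB hBL'⟩
  · rintro ⟨_, hmax⟩ ⟨L', hL', hss⟩
    exact hmax _ (labelling_T_localCong hL') hss
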